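/- arXiv:1904.07978 — 2 statements merged into one kernel-verified Lean document; each statement's English description precedes it below -/
import Mathlib

section
/- Fix M ≥ 1, an index k, nonnegative reals a₁,…,a_M, and d > 0, and define f : ℝ^M → ℝ by f(α) = a_k·α_k / (Σ_{i≠k} a_i·α_i + d) and R(α) = log₂(1 + f(α)). Let S = {α ∈ ℝ^M : α_i ≥ 0 for all i}. Then R is differentiable on S and pseudolinear on S, i.e., for all x, y ∈ S: (i) if the Fréchet derivative of R at y applied to (x − y) is ≥ 0 then R(x) ≥ R(y), and (ii) if it is ≤ 0 then R(x) ≤ R(y). -/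
/-!
The linear-fractional function `f x = n x / (ℓ x + d)` with positive denominator satisfies
`f x - f y = (ℓ y + d) / (ℓ x + d) * f'(y)(x - y)`, so the sign of the directional derivative
at `y` towards `x` is the sign of `f x - f y`; this is pseudolinearity. Composing with the
increasing function `t ↦ log₂ (1 + t)`, whose derivative is positive, multiplies the derivative
by a positive factor and preserves the order of values, hence preserves pseudolinearity.
-/

open Finset

section Pseudolinear

variable {E : Type*} [NormedAddCommGroup E] [NormedSpace ℝ E]

def PseudolinearOn (f : E → ℝ) (s : Set E) : Prop :=
  ∀ x ∈ s, ∀ y ∈ s,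
    (0 ≤ fderiv ℝ f y (x - y) → f y ≤ f x) ∧ (fderiv ℝ f y (x - y) ≤ 0 → f x ≤ f y)

theorem PseudolinearOn.of_sub_eq_pos_mul_fderiv {f : E → ℝ} {s : Set E}
    (h : ∀ x ∈ s, ∀ y ∈ s, ∃ c, 0 < c ∧ f x - f y = c * fderiv ℝ f y (x - y)) :
    PseudolinearOn f s := by
  intro x hx y hy
  obtain ⟨c, hc, hxy⟩ := h x hx y hy
  exact ⟨fun _ => by nlinarith, fun _ => by nlinarith⟩

theorem PseudolinearOn.comp {f : E → ℝ} {s : Set E} {φ φ' : ℝ → ℝ} {t : Set ℝ}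
    (hf : PseudolinearOn f s) (hfd : ∀ y ∈ s, DifferentiableAt ℝ f y) (hst : Set.MapsTo f s t)
    (hφ : ∀ u ∈ t, HasDerivAt φ (φ' u) u) (hφ' : ∀ u ∈ t, 0 < φ' u) (hmono : MonotoneOn φ t) :
    PseudolinearOn (φ ∘ f) s := by
  intro x hx y hy
  have hderiv : fderiv ℝ (φ ∘ f) y (x - y) = φ' (f y) * fderiv ℝ f y (x - y) := by
    rw [((hφ _ (hst hy)).comp_hasFDerivAt y (hfd y hy).hasFDerivAt).fderiv]
    rfl
  have hpos := hφ' _ (hst hy)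
  obtain ⟨hle, hge⟩ := hf x hx y hy
  rw [hderiv]
  exact ⟨fun h => hmono (hst hy) (hst hx) (hle (nonneg_of_mul_nonneg_right h hpos)),
    fun h => hmono (hst hx) (hst hy) (hge (nonpos_of_mul_nonpos_right h hpos))⟩

theorem hasFDerivAt_div_affine (n ℓ : E →L[ℝ] ℝ) (d : ℝ) {y : E} (hy : ℓ y + d ≠ 0) :
    HasFDerivAt (fun x => n x / (ℓ x + d))
      (((ℓ y + d) ^ 2)⁻¹ • ((ℓ y + d) • n - n y • ℓ)) y := by
  have h : HasFDerivAt (fun x => n x * (ℓ x + d)⁻¹) _ y :=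
    n.hasFDerivAt.mul ((hasDerivAt_inv hy).comp_hasFDerivAt y (ℓ.hasFDerivAt.add_const d))
  simp only [← div_eq_mul_inv] at h
  refine h.congr_fderiv ?_
  ext v
  simp only [neg_smul, smul_neg, add_apply, neg_apply, smul_apply, smul_eq_mul, sub_apply]
  field_simp
  ring

theorem pseudolinearOn_div_affine (n ℓ : E →L[ℝ] ℝ) (d : ℝ) {s : Set E}
    (hs : ∀ x ∈ s, 0 < ℓ x + d) : PseudolinearOn (fun x => n x / (ℓ x + d)) s := by
  refine .of_sub_eq_pos_mul_fderiv fun x hx y hy => ⟨(ℓ y + d) / (ℓ x + d), ?_, ?_⟩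
  · exact div_pos (hs y hy) (hs x hx)
  · have hx := (hs x hx).ne'
    have hy := (hs y hy).ne'
    rw [(hasFDerivAt_div_affine n ℓ d hy).fderiv]
    simp only [smul_apply, sub_apply, map_sub, smul_eq_mul]
    field_simp
    ring

end Pseudolinear

theorem hasDerivAt_logb_one_add {b t : ℝ} (ht : 1 + t ≠ 0) :
    HasDerivAt (fun u => Real.logb b (1 + u)) ((1 + t)⁻¹ / Real.log b) t := by
  simpa [Real.logb] using (((hasDerivAt_id t).const_add 1).log ht).div_const (Real.log b)

theorem throughput_pseudolinear_in_alpha_general (M : ℕ) (k : Fin M)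
    (a : Fin M → ℝ) (ha : ∀ i, 0 ≤ a i) (d : ℝ) (hd : 0 < d) :
    let f : (Fin M → ℝ) → ℝ :=
      fun α => a k * α k / (∑ i ∈ univ.erase k, a i * α i + d)
    let R : (Fin M → ℝ) → ℝ := fun α => Real.logb 2 (1 + f α)
    let S : Set (Fin M → ℝ) := {α | ∀ i, 0 ≤ α i}
    DifferentiableOn ℝ R S ∧
      ∀ x ∈ S, ∀ y ∈ S,
        (0 ≤ fderiv ℝ R y (x - y) → R y ≤ R x) ∧
        (fderiv ℝ R y (x - y) ≤ 0 → R x ≤ R y) := by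
  intro f R S
  set n : (Fin M → ℝ) →L[ℝ] ℝ := a k • ContinuousLinearMap.proj k
  set ℓ : (Fin M → ℝ) →L[ℝ] ℝ := ∑ i ∈ univ.erase k, a i • ContinuousLinearMap.proj i
  have hf : f = fun x => n x / (ℓ x + d) := by
    funext x
    simp [f, n, ℓ]
  have hden : ∀ x ∈ S, 0 < ℓ x + d := fun x hx => by
    simp only [ℓ, _root_.sum_apply, smul_apply, ContinuousLinearMap.proj_apply, smul_eq_mul]
    exact add_pos_of_nonneg_of_pos (sum_nonneg fun i _ => mul_nonneg (ha i) (hx i)) hd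
  have hfS : Set.MapsTo f S (Set.Ici 0) := fun x hx => by
    rw [hf]
    exact div_nonneg (mul_nonneg (ha k) (hx k)) (hden x hx).le
  have hfd : ∀ y ∈ S, DifferentiableAt ℝ f y := fun y hy =>
    hf ▸ (hasFDerivAt_div_affine n ℓ d (hden y hy).ne').differentiableAt
  have hφ : ∀ u ∈ Set.Ici (0 : ℝ),
      HasDerivAt (fun u => Real.logb 2 (1 + u)) ((1 + u)⁻¹ / Real.log 2) u :=
    fun u hu => hasDerivAt_logb_one_add (by linarith [Set.mem_Ici.mp hu])
  have hφ' : ∀ u ∈ Set.Ici (0 : ℝ), 0 < (1 + u)⁻¹ / Real.log 2 := fun u hu => by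
    have := Set.mem_Ici.mp hu
    have := Real.log_pos one_lt_two
    positivity
  have hmono : MonotoneOn (fun u => Real.logb 2 (1 + u)) (Set.Ici 0) := fun u hu v _ huv =>
    Real.logb_le_logb_of_le one_lt_two (by linarith [Set.mem_Ici.mp hu]) (by linarith)
  refine ⟨fun y hy => ((hφ _ (hfS hy)).comp_hasFDerivAt y
    (hfd y hy).hasFDerivAt).differentiableAt.differentiableWithinAt, ?_⟩
  exact (hf ▸ pseudolinearOn_div_affine n ℓ d hden : PseudolinearOn f S).comp hfd hfS hφ hφ' hmono

/-- Pseudolinearity of the throughput in the backscattering coefficients: with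
f(α) = a_k α_k / (∑_{i≠k} a_i α_i + d) and R(α) = log₂(1 + f(α)), R is differentiable on the
nonnegative orthant S and pseudolinear on S: for x, y ∈ S, R'(y)(x−y) ≥ 0 ⟹ R(x) ≥ R(y) and
R'(y)(x−y) ≤ 0 ⟹ R(x) ≤ R(y). -/
theorem throughput_pseudolinear_in_alpha (M : ℕ) (hM : 1 ≤ M) (k : Fin M)
    (a : Fin M → ℝ) (ha : ∀ i, 0 ≤ a i) (d : ℝ) (hd : 0 < d) :
    let f : (Fin M → ℝ) → ℝ :=
      fun α => a k * α k / (∑ i ∈ univ.erase k, a i * α i + d)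
    let R : (Fin M → ℝ) → ℝ := fun α => Real.logb 2 (1 + f α)
    let S : Set (Fin M → ℝ) := {α | ∀ i, 0 ≤ α i}
    DifferentiableOn ℝ R S ∧
      ∀ x ∈ S, ∀ y ∈ S,
        (0 ≤ fderiv ℝ R y (x - y) → R y ≤ R x) ∧
        (fderiv ℝ R y (x - y) ≤ 0 → R x ≤ R y) :=
  throughput_pseudolinear_in_alpha_general M k a ha d hd
end

section
/- Fix M ≥ 1, nonnegative reals a_k and b_{k,i} (for k ≠ i), positive reals d_k, and 0 ≤ α_min ≤ α_max. Define γ^{sum}(α) = Σ_{k=1}^M a_k·α_k / (Σ_{i≠k} b_{k,i}·α_i + d_k) for α ∈ ℝ^M. Then there exists α* with α*_k ∈ {α_min, α_max} for every k such that γ^{sum}(α) ≤ γ^{sum}(α*) for all α in the box [α_min, α_max]^M; i.e., the maximum of the sum of SINRs over the box is attained at a vertex, so the optimal backscattering coefficient of each tag is either α_min or α_max. -/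
open Finset

private lemma convexOn_finset_sum {ι : Type*} (t : Finset ι) {s : Set ℝ} (hs : Convex ℝ s)
    {f : ι → ℝ → ℝ} (h : ∀ i ∈ t, ConvexOn ℝ s (f i)) :
    ConvexOn ℝ s (fun x => ∑ i ∈ t, f i x) := by
  classical
  induction t using Finset.induction with
  | empty => simpa using convexOn_const 0 hs
  | @insert j t hj ih =>
    simp only [Finset.sum_insert hj]
    exact (h _ (mem_insert_self _ _)).add (ih fun i hi => h i (mem_insert_of_mem hi))

private lemma convexOn_mul_left {q lo hi : ℝ} (hq : 0 ≤ q) :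
    ConvexOn ℝ (Set.Icc lo hi) (fun t : ℝ => q * t) := by
  have := (convexOn_id (convex_Icc lo hi)).smul hq
  simpa [smul_eq_mul] using this

private lemma convexOn_inv_affine {c p e lo hi : ℝ} (hc : 0 ≤ c) (hp : 0 ≤ p) (he : 0 < e)
    (hlo : 0 ≤ lo) :
    ConvexOn ℝ (Set.Icc lo hi) (fun t : ℝ => c / (p * t + e)) := by
  have h1 := (convexOn_zpow (𝕜 := ℝ) (-1)).comp_affineMap (AffineMap.lineMap (e : ℝ) (e + p))
  have hsub : Set.Icc lo hi ⊆ (AffineMap.lineMap (e : ℝ) (e + p)) ⁻¹' Set.Ioi 0 := by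
    intro t ht
    have ht0 : 0 ≤ t := le_trans hlo ht.1
    simp only [Set.mem_preimage, AffineMap.lineMap_apply, Set.mem_Ioi]
    simp only [vsub_eq_sub, vadd_eq_add, add_sub_cancel_left, smul_eq_mul]
    nlinarith
  have h2 := (h1.subset hsub (convex_Icc lo hi)).smul hc
  simp only [Function.comp_apply] at h2
  have heq : (fun t : ℝ => c • ((AffineMap.lineMap (e : ℝ) (e + p)) t) ^ (-1 : ℤ))
      = fun t : ℝ => c / (p * t + e) := by
    funext t
    simp only [AffineMap.lineMap_apply, vsub_eq_sub, vadd_eq_add, add_sub_cancel_left,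
      smul_eq_mul, zpow_neg, zpow_one, div_eq_mul_inv]
    ring_nf
  rwa [heq] at h2

/-- Lemma 5 (binary backscattering optimality): the maximum of the sum of SINRs
γ^sum(α) = ∑_k a_k α_k / (∑_{i≠k} b_{k,i} α_i + d_k) over the box [α_min, α_max]^M is
attained at a vertex, i.e. at some α* with α*_k ∈ {α_min, α_max} for every k. -/
theorem binary_bc_optimal (M : ℕ) (hM : 1 ≤ M) (a : Fin M → ℝ) (ha : ∀ k, 0 ≤ a k)
    (b : Fin M → Fin M → ℝ) (hb : ∀ k i, k ≠ i → 0 ≤ b k i)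
    (d : Fin M → ℝ) (hd : ∀ k, 0 < d k)
    (αmin αmax : ℝ) (h0 : 0 ≤ αmin) (h1 : αmin ≤ αmax) :
    let γsum : (Fin M → ℝ) → ℝ :=
      fun α => ∑ k, a k * α k / (∑ i ∈ univ.erase k, b k i * α i + d k)
    ∃ αstar : Fin M → ℝ, (∀ k, αstar k = αmin ∨ αstar k = αmax) ∧
      ∀ α : Fin M → ℝ, (∀ k, αmin ≤ α k ∧ α k ≤ αmax) → γsum α ≤ γsum αstar := by
  classical
  intro γsum
  -- per-coordinate convexity step
  have key : ∀ (α : Fin M → ℝ), (∀ k, αmin ≤ α k ∧ α k ≤ αmax) → ∀ j : Fin M,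
      ∃ t : ℝ, (t = αmin ∨ t = αmax) ∧ γsum α ≤ γsum (Function.update α j t) := by
    intro α hα j
    have hα0 : ∀ k, 0 ≤ α k := fun k => le_trans h0 (hα k).1
    set g : ℝ → ℝ := fun t => γsum (Function.update α j t) with hg
    have hconv : ConvexOn ℝ (Set.Icc αmin αmax) g := by
      have : g = fun t => ∑ k, a k * Function.update α j t k /
          (∑ i ∈ univ.erase k, b k i * Function.update α j t i + d k) := rfl
      rw [this]
      apply convexOn_finset_sum _ (convex_Icc _ _)
      intro k _
      by_cases hk : k = j
      · subst hk
        have hD : 0 < ∑ i ∈ univ.erase k, b k i * α i + d k := by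
          have : 0 ≤ ∑ i ∈ univ.erase k, b k i * α i :=
            Finset.sum_nonneg fun i hi =>
              mul_nonneg (hb k i (fun h => (mem_erase.1 hi).1 h.symm)) (hα0 i)
          linarith [hd k]
        have heq : (fun t : ℝ => a k * Function.update α k t k /
            (∑ i ∈ univ.erase k, b k i * Function.update α k t i + d k))
            = fun t : ℝ => (a k / (∑ i ∈ univ.erase k, b k i * α i + d k)) * t := by
          funext t
          have h2 : ∑ i ∈ univ.erase k, b k i * Function.update α k t i
              = ∑ i ∈ univ.erase k, b k i * α i :=
            Finset.sum_congr rfl fun i hi => by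
              rw [Function.update_of_ne (mem_erase.1 hi).1]
          rw [h2, Function.update_self]; ring
        rw [heq]
        exact convexOn_mul_left (div_nonneg (ha k) hD.le)
      · have hjk : j ∈ univ.erase k := mem_erase.2 ⟨fun h => hk h.symm, mem_univ j⟩
        set S : ℝ := ∑ i ∈ (univ.erase k).erase j, b k i * α i with hS
        have hS0 : 0 ≤ S :=
          Finset.sum_nonneg fun i hi =>
            mul_nonneg (hb k i (fun h => (mem_erase.1 (mem_erase.1 hi).2).1 h.symm)) (hα0 i)
        have heq : (fun t : ℝ => a k * Function.update α j t k /
            (∑ i ∈ univ.erase k, b k i * Function.update α j t i + d k))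
            = fun t : ℝ => (a k * α k) / (b k j * t + (S + d k)) := by
          funext t
          have h2 : ∑ i ∈ univ.erase k, b k i * Function.update α j t i
              = b k j * t + S := by
            rw [← Finset.add_sum_erase _ _ hjk, Function.update_self, hS]
            congr 1
            exact Finset.sum_congr rfl fun i hi => by
              rw [Function.update_of_ne (mem_erase.1 hi).1]
          rw [h2, Function.update_of_ne hk]
          ring_nf
        rw [heq]
        exact convexOn_inv_affine (mul_nonneg (ha k) (hα0 k))
          (hb k j hk) (by linarith [hd k, hS0] : (0:ℝ) < S + d k) h0
    have hmem : α j ∈ Set.Icc αmin αmax := ⟨(hα j).1, (hα j).2⟩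
    have := hconv.le_max_of_mem_Icc (Set.left_mem_Icc.2 h1) (Set.right_mem_Icc.2 h1) hmem
    rcases le_or_gt (g αmax) (g αmin) with h | h
    · refine ⟨αmin, Or.inl rfl, ?_⟩
      have hupd : Function.update α j (α j) = α := Function.update_eq_self j α
      calc γsum α = g (α j) := by rw [hg]; simp [hupd]
        _ ≤ max (g αmin) (g αmax) := this
        _ = g αmin := max_eq_left h
    · refine ⟨αmax, Or.inr rfl, ?_⟩
      have hupd : Function.update α j (α j) = α := Function.update_eq_self j α
      calc γsum α = g (α j) := by rw [hg]; simp [hupd]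
        _ ≤ max (g αmin) (g αmax) := this
        _ = g αmax := max_eq_right h.le
  -- vertexification over a finset of coordinates
  have claim : ∀ (T : Finset (Fin M)) (α : Fin M → ℝ), (∀ k, αmin ≤ α k ∧ α k ≤ αmax) →
      ∃ β : Fin M → ℝ, (∀ k, αmin ≤ β k ∧ β k ≤ αmax) ∧
        (∀ k ∈ T, β k = αmin ∨ β k = αmax) ∧ (∀ k ∉ T, β k = α k) ∧ γsum α ≤ γsum β := by
    intro T
    induction T using Finset.induction with
    | empty => exact fun α hα => ⟨α, hα, by simp, fun _ _ => rfl, le_refl _⟩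
    | @insert j T hj ih =>
      intro α hα
      obtain ⟨t, ht, hle⟩ := key α hα j
      have hα' : ∀ k, αmin ≤ Function.update α j t k ∧ Function.update α j t k ≤ αmax := by
        intro k
        by_cases hk : k = j
        · subst hk; rw [Function.update_self]
          rcases ht with h | h <;> simp [h, h1]
        · rw [Function.update_of_ne hk]; exact hα k
      obtain ⟨β, hβbox, hβT, hβout, hβle⟩ := ih (Function.update α j t) hα'
      refine ⟨β, hβbox, ?_, ?_, le_trans hle hβle⟩
      · intro k hk
        rcases Finset.mem_insert.1 hk with h | h
        · subst h
          rw [hβout k hj, Function.update_self]; exact ht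
        · exact hβT k h
      · intro k hk
        have hkT : k ∉ T := fun h => hk (Finset.mem_insert_of_mem h)
        have hkj : k ≠ j := fun h => hk (h ▸ Finset.mem_insert_self j T)
        rw [hβout k hkT, Function.update_of_ne hkj]
  -- pick best vertex among finitely many
  obtain ⟨p, _, hp⟩ := Finset.exists_max_image (Finset.univ : Finset (Fin M → Bool))
    (fun p => γsum (fun k => if p k then αmax else αmin)) ⟨fun _ => true, Finset.mem_univ _⟩
  refine ⟨fun k => if p k then αmax else αmin, fun k => by by_cases h : p k <;> simp [h], ?_⟩
  intro α hα
  obtain ⟨β, _, hβv, _, hβle⟩ := claim Finset.univ α hα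
  have hβeq : β = fun k => if (fun k => decide (β k = αmax)) k then αmax else αmin := by
    funext k
    rcases hβv k (Finset.mem_univ k) with h | h <;> by_cases h2 : β k = αmax <;>
      simp [h, h2] at * <;> simp [h, h2]
  calc γsum α ≤ γsum β := hβle
    _ = γsum (fun k => if (fun k => decide (β k = αmax)) k then αmax else αmin) := by
        rw [← hβeq]
    _ ≤ _ := hp _ (Finset.mem_univ _)
end
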